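/- arXiv:1610.05565 — 3 statements merged into one kernel-verified Lean document; each statement's English description precedes it below -/
import Mathlib

section
/- Let k be a natural number and let p : ℝ → ℝ be a polynomial of degree at most k. Then p(1)^2 ≤ (k+1)^2 · ∫₀¹ p(x)^2 dx. -/
/-!
Expand `p = ∑ cᵢ Pᵢ` in the shifted Legendre polynomials. By Rodrigues' formula and repeated
integration by parts they are orthogonal on `[0, 1]`; moreover `Pᵢ(1) = ±1` and
`∫ Pᵢ² = 1 / (2i + 1)`. Hence `p(1) = ∑ ±cᵢ` and `∫ p² = ∑ cᵢ² / (2i + 1)`, and the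
Cauchy–Schwarz inequality against the weights `2i + 1`, whose sum is `(k + 1)²`, gives the bound.
-/

open Polynomial Finset

noncomputable section

theorem Finset.sum_range_two_mul_add_one {R : Type*} [CommSemiring R] (n : ℕ) :
    ∑ i ∈ range n, (2 * (i : R) + 1) = (n : R) ^ 2 := by
  induction n with
  | zero => simp
  | succ n ih => rw [sum_range_succ, ih]; push_cast; ring

namespace Polynomial

def intervalIntegralₗ (a b : ℝ) : ℝ[X] →ₗ[ℝ] ℝ where
  toFun p := ∫ x in a..b, p.eval x
  map_add' p q := by
    simpa using intervalIntegral.integral_add (p.continuous.intervalIntegrable a b)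
      (q.continuous.intervalIntegrable a b)
  map_smul' c p := by simp

variable {a b : ℝ}

@[simp]
theorem intervalIntegralₗ_apply (p : ℝ[X]) :
    intervalIntegralₗ a b p = ∫ x in a..b, p.eval x := rfl

theorem intervalIntegralₗ_derivative_mul (p q : ℝ[X]) :
    intervalIntegralₗ a b (derivative p * q) =
      p.eval b * q.eval b - p.eval a * q.eval a - intervalIntegralₗ a b (p * derivative q) := by
  have := intervalIntegral.integral_mul_deriv_eq_deriv_mul (fun x _ => p.hasDerivAt x)
    (fun x _ => q.hasDerivAt x) (p.derivative.continuous.intervalIntegrable a b)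
    (q.derivative.continuous.intervalIntegrable a b)
  simp only [intervalIntegralₗ_apply, eval_mul]
  linarith

theorem eval_iterate_derivative_eq_zero {R : Type*} [CommRing R] {w : R[X]} {c : R} {n r : ℕ}
    (hw : (X - C c) ^ n ∣ w) (hr : r < n) : (derivative^[r] w).eval c = 0 :=
  dvd_iff_isRoot.mp <| (dvd_pow_self _ (Nat.sub_ne_zero_of_lt hr)).trans
    (pow_sub_dvd_iterate_derivative_of_pow_dvd r hw)

theorem intervalIntegralₗ_iterate_derivative_mul {w : ℝ[X]} {n : ℕ} (ha : (X - C a) ^ n ∣ w)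
    (hb : (X - C b) ^ n ∣ w) (q : ℝ[X]) :
    intervalIntegralₗ a b (derivative^[n] w * q) =
      (-1) ^ n * intervalIntegralₗ a b (w * derivative^[n] q) := by
  induction n generalizing q with
  | zero => simp
  | succ n ih =>
    have hdvd {c : ℝ} (h : (X - C c) ^ (n + 1) ∣ w) : (X - C c) ^ n ∣ w :=
      (pow_dvd_pow _ n.le_succ).trans h
    rw [Function.iterate_succ_apply', intervalIntegralₗ_derivative_mul,
      eval_iterate_derivative_eq_zero ha n.lt_succ_self,
      eval_iterate_derivative_eq_zero hb n.lt_succ_self, ih (hdvd ha) (hdvd hb),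
      ← Function.iterate_succ_apply, pow_succ]
    ring

theorem intervalIntegralₗ_iterate_derivative_mul_eq_zero {w q : ℝ[X]} {n : ℕ}
    (ha : (X - C a) ^ n ∣ w) (hb : (X - C b) ^ n ∣ w) (hq : q.degree < n) :
    intervalIntegralₗ a b (derivative^[n] w * q) = 0 := by
  rw [intervalIntegralₗ_iterate_derivative_mul ha hb, iterate_derivative_eq_zero_of_degree_lt hq,
    mul_zero, map_zero, mul_zero]

theorem degree_X_mul_derivative_sub_lt {R : Type*} [CommRing R] {p : R[X]} {n : ℕ}
    (hp : p.natDegree ≤ n) : (X * derivative p - C (n : R) * p).degree < (n : WithBot ℕ) := by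
  rw [degree_lt_iff_coeff_zero]
  intro m hm
  rcases m with _ | m
  · obtain rfl := Nat.le_zero.mp hm
    simp
  · rw [coeff_sub, coeff_X_mul, coeff_derivative, coeff_C_mul]
    rcases hm.eq_or_lt with rfl | hlt
    · push_cast; ring
    · rw [coeff_eq_zero_of_natDegree_lt (hp.trans_lt hlt)]; ring

def shiftedLegendreReal (n : ℕ) : ℝ[X] := (shiftedLegendre n).map (algebraMap ℤ ℝ)

theorem degree_shiftedLegendreReal (n : ℕ) : (shiftedLegendreReal n).degree = n := by
  rw [shiftedLegendreReal, degree_map_eq_of_injective (RingHom.injective_int _),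
    degree_shiftedLegendre]

def shiftedLegendreSequence : Sequence ℝ := ⟨shiftedLegendreReal, degree_shiftedLegendreReal⟩

theorem eval_one_shiftedLegendreReal (n : ℕ) : (shiftedLegendreReal n).eval 1 = (-1) ^ n := by
  rw [shiftedLegendreReal, eval_map_algebraMap, shiftedLegendre_eval_symm, sub_self,
    ← coeff_zero_eq_aeval_zero', coeff_shiftedLegendre]
  simp

theorem factorial_mul_shiftedLegendreReal (n : ℕ) :
    (n.factorial : ℝ[X]) * shiftedLegendreReal n = derivative^[n] (X ^ n * (1 - X) ^ n) := by
  simpa [shiftedLegendreReal, ← iterate_derivative_map] using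
    congrArg (map (algebraMap ℤ ℝ)) (factorial_mul_shiftedLegendre_eq n)

theorem intervalIntegralₗ_shiftedLegendreReal_mul_eq_zero {n : ℕ} {q : ℝ[X]}
    (hq : q.degree < n) : intervalIntegralₗ 0 1 (shiftedLegendreReal n * q) = 0 := by
  have h0 : (X - C 0) ^ n ∣ (X ^ n * (1 - X) ^ n : ℝ[X]) := by simp
  have h1 : (X - C 1) ^ n ∣ (X ^ n * (1 - X) ^ n : ℝ[X]) := by
    rw [show (1 - X : ℝ[X]) = -(X - C 1) by simp, neg_pow]
    exact (dvd_mul_left _ _).mul_left _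
  have := intervalIntegralₗ_iterate_derivative_mul_eq_zero h0 h1 hq
  rw [← factorial_mul_shiftedLegendreReal, mul_assoc, ← C_eq_natCast, ← smul_eq_C_mul,
    map_smul, smul_eq_zero] at this
  exact this.resolve_left (by positivity)

/-- `X P' - n P` has degree `< n`, so orthogonality gives `∫ X P P' = n ∫ P²`, while integration by
parts gives `2 ∫ X P P' = P(1)² - ∫ P²`. -/
theorem intervalIntegralₗ_shiftedLegendreReal_mul_self (n : ℕ) :
    intervalIntegralₗ 0 1 (shiftedLegendreReal n * shiftedLegendreReal n) = 1 / (2 * n + 1) := by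
  set P := shiftedLegendreReal n
  have hP1 : P.eval 1 * P.eval 1 = 1 := by
    rw [eval_one_shiftedLegendreReal, ← pow_add, ← two_mul, pow_mul]; simp
  have hdeg : P.natDegree ≤ n :=
    (natDegree_eq_of_degree_eq_some (degree_shiftedLegendreReal n)).le
  have horth := intervalIntegralₗ_shiftedLegendreReal_mul_eq_zero
    (degree_X_mul_derivative_sub_lt hdeg)
  have hparts := intervalIntegralₗ_derivative_mul (a := 0) (b := 1) P (X * P)
  rw [show P * (X * derivative P - C (n : ℝ) * P) = X * P * derivative P - (n : ℝ) • (P * P) by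
      rw [smul_eq_C_mul]; ring, map_sub, map_smul, smul_eq_mul] at horth
  rw [derivative_mul, derivative_X, one_mul, mul_add, map_add,
    show derivative P * (X * P) = X * P * derivative P by ring,
    show P * (X * derivative P) = X * P * derivative P by ring] at hparts
  simp only [eval_mul, eval_X, zero_mul, mul_zero, sub_zero, one_mul, hP1] at hparts
  field_simp
  linarith

theorem intervalIntegralₗ_shiftedLegendreReal_mul (i j : ℕ) :
    intervalIntegralₗ 0 1 (shiftedLegendreReal i * shiftedLegendreReal j) =
      if i = j then 1 / (2 * (i : ℝ) + 1) else 0 := by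
  rcases lt_trichotomy i j with hij | rfl | hij
  · rw [if_neg hij.ne, mul_comm, intervalIntegralₗ_shiftedLegendreReal_mul_eq_zero]
    rwa [degree_shiftedLegendreReal, Nat.cast_lt]
  · rw [if_pos rfl, intervalIntegralₗ_shiftedLegendreReal_mul_self]
  · rw [if_neg hij.ne', intervalIntegralₗ_shiftedLegendreReal_mul_eq_zero]
    rwa [degree_shiftedLegendreReal, Nat.cast_lt]

theorem exists_eq_sum_smul_shiftedLegendreReal {p : ℝ[X]} {k : ℕ} (hp : p.degree ≤ k) :
    ∃ c : ℕ → ℝ, ∑ i ∈ range (k + 1), c i • shiftedLegendreReal i = p := by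
  have hunit (i : ℕ) (_ : i ≤ k) : IsUnit (shiftedLegendreSequence i).leadingCoeff :=
    isUnit_iff_ne_zero.mpr (leadingCoeff_ne_zero.mpr (shiftedLegendreSequence.ne_zero i))
  have hIic : Set.Iic k = ↑(range (k + 1)) := by ext; simp
  rw [← mem_degreeLE, ← shiftedLegendreSequence.span_degreeLE hunit, hIic,
    Submodule.mem_span_image_finset_iff_exists_fun'] at hp
  exact hp

theorem intervalIntegralₗ_sum_smul_shiftedLegendreReal_sq (s : Finset ℕ) (c : ℕ → ℝ) :
    intervalIntegralₗ 0 1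
        ((∑ i ∈ s, c i • shiftedLegendreReal i) * ∑ i ∈ s, c i • shiftedLegendreReal i) =
      ∑ i ∈ s, c i ^ 2 / (2 * i + 1) := by
  simp only [sum_mul_sum, map_sum, smul_mul_smul_comm, map_smul, smul_eq_mul,
    intervalIntegralₗ_shiftedLegendreReal_mul, mul_ite, mul_zero, sum_ite_eq]
  refine sum_congr rfl fun i hi => ?_
  rw [if_pos hi]
  ring

theorem eval_one_sum_smul_shiftedLegendreReal (s : Finset ℕ) (c : ℕ → ℝ) :
    (∑ i ∈ s, c i • shiftedLegendreReal i).eval 1 = ∑ i ∈ s, c i * (-1) ^ i := by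
  simp only [eval_finsetSum, eval_smul, eval_one_shiftedLegendreReal, smul_eq_mul]

end Polynomial

end

/-- One-dimensional discrete trace inequality with sharp constant `(k+1)^2`:
for any polynomial `p` of degree at most `k`,
`p(1)^2 ≤ (k+1)^2 * ∫ x in (0,1), p(x)^2`. -/
theorem discrete_trace_inequality_1d (k : ℕ) (p : Polynomial ℝ)
    (hdeg : p.degree ≤ k) :
    (p.eval 1) ^ 2 ≤ ((k : ℝ) + 1) ^ 2 * ∫ x in (0:ℝ)..1, (p.eval x) ^ 2 := by
  obtain ⟨c, rfl⟩ := exists_eq_sum_smul_shiftedLegendreReal hdeg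
  have hsq (q : ℝ[X]) : ∫ x in (0:ℝ)..1, (q.eval x) ^ 2 = intervalIntegralₗ 0 1 (q * q) := by
    simp [sq]
  have hweights : ∑ i ∈ range (k + 1), (2 * (i : ℝ) + 1) = ((k : ℝ) + 1) ^ 2 := by
    rw [sum_range_two_mul_add_one]; push_cast; ring
  rw [hsq, intervalIntegralₗ_sum_smul_shiftedLegendreReal_sq,
    eval_one_sum_smul_shiftedLegendreReal, ← hweights, mul_comm, ← div_le_iff₀ (by positivity)]
  calc (∑ i ∈ range (k + 1), c i * (-1) ^ i) ^ 2 / ∑ i ∈ range (k + 1), (2 * (i : ℝ) + 1)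
      ≤ ∑ i ∈ range (k + 1), (c i * (-1) ^ i) ^ 2 / (2 * i + 1) :=
        sq_sum_div_le_sum_sq_div _ _ fun i _ => by positivity
    _ = ∑ i ∈ range (k + 1), c i ^ 2 / (2 * i + 1) := by
        refine sum_congr rfl fun i _ => ?_
        rw [mul_pow, pow_right_comm, neg_one_sq, one_pow, mul_one]
end

section
/- Let k be a natural number, h > 0, a, b ∈ ℝ, and let v : ℝ × ℝ → ℝ be a tensor-product polynomial of degree at most k in each of the two variables (i.e., v ∈ Q_k). Let K = [a, a+h] × [b, b+h] be the square of side length h and let F = {a+h} × [b, b+h] be its right edge. Then ∫_b^{b+h} v(a+h, y)^2 dy ≤ (k+1)^2 · h^{-1} · ∫_a^{a+h} ∫_b^{b+h} v(x,y)^2 dy dx. -/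
/-!
On `[0, 1]`, evaluation at `0` on polynomials of degree `< k` is represented by the kernel
`W = traceKernel k = ∑_{n < k} (2n + 1) Pₙ`, where `Pₙ` are the shifted Legendre polynomials: Rodrigues' formula
and repeated integration by parts make `Pₙ` orthogonal to lower degrees with `∫ Pₙ² = 1/(2n + 1)`,
and `Pₙ(0) = 1`. Thus `q(0) = ∫ q W` and `∫ W² = W(0) = k²`, so Cauchy–Schwarz gives
`q(0)² ≤ (k + 1)² ∫ q²` for `deg q ≤ k`. An affine change of variables moves this bound to the
right end of `[a, a + h]`; applied to each slice `v(·, y)`, a polynomial of degree `≤ k` in `x`,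
and integrated in `y`, it yields the bound on the square.
-/

open Polynomial Nat

noncomputable def unitIntegral : ℝ[X] →ₗ[ℝ] ℝ where
  toFun p := ∫ x in (0 : ℝ)..1, p.eval x
  map_add' p q := by
    simp only [eval_add]
    exact intervalIntegral.integral_add (p.continuous.intervalIntegrable _ _)
      (q.continuous.intervalIntegrable _ _)
  map_smul' c p := by simp [intervalIntegral.integral_const_mul]

theorem unitIntegral_apply (p : ℝ[X]) : unitIntegral p = ∫ x in (0 : ℝ)..1, p.eval x := rfl

theorem unitIntegral_C_mul (c : ℝ) (p : ℝ[X]) : unitIntegral (C c * p) = c * unitIntegral p := by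
  rw [← smul_eq_C_mul, map_smul, smul_eq_mul]

theorem unitIntegral_mul_self_nonneg (p : ℝ[X]) : 0 ≤ unitIntegral (p * p) :=
  intervalIntegral.integral_nonneg zero_le_one fun x _ => by
    simpa only [eval_mul] using mul_self_nonneg _

theorem unitIntegral_derivative (p : ℝ[X]) :
    unitIntegral (derivative p) = p.eval 1 - p.eval 0 :=
  intervalIntegral.integral_eq_sub_of_hasDerivAt (fun x _ => p.hasDerivAt x)
    (p.derivative.continuous.intervalIntegrable _ _)

theorem unitIntegral_mul_derivative (r s : ℝ[X]) :
    unitIntegral (r * derivative s) =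
      r.eval 1 * s.eval 1 - r.eval 0 * s.eval 0 - unitIntegral (derivative r * s) := by
  rw [← eval_mul, ← eval_mul, ← unitIntegral_derivative, derivative_mul, map_add]
  ring

theorem unitIntegral_mul_iterate_derivative {g : ℝ[X]} {n : ℕ}
    (hg : ∀ i < n, (derivative^[i] g).eval 0 = 0 ∧ (derivative^[i] g).eval 1 = 0) (r : ℝ[X]) :
    unitIntegral (r * derivative^[n] g) = (-1) ^ n * unitIntegral (derivative^[n] r * g) := by
  induction n generalizing r with
  | zero => simp
  | succ n ih =>
    obtain ⟨h0, h1⟩ := hg n n.lt_succ_self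
    rw [Function.iterate_succ_apply', unitIntegral_mul_derivative, h0, h1,
      ih (fun i hi => hg i (hi.trans n.lt_succ_self)), Function.iterate_succ_apply]
    ring

theorem unitIntegral_X_pow_mul_one_sub_X_pow (p q : ℕ) :
    unitIntegral (X ^ p * (1 - X) ^ q) = p ! * q ! / (p + q + 1)! := by
  induction q generalizing p with
  | zero =>
    simp only [pow_zero, mul_one, unitIntegral_apply, eval_pow, eval_X, integral_pow, one_pow,
      zero_pow (succ_ne_zero p), sub_zero, add_zero, factorial_zero, factorial_succ]
    push_cast
    field_simp
  | succ q ih =>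
    have hleft : (1 - X) ^ (q + 1) * derivative (X ^ (p + 1)) =
        C ((p : ℝ) + 1) * (X ^ p * (1 - X) ^ (q + 1)) := by
      simp only [derivative_X_pow_succ, map_add, map_natCast, map_one]
      ring
    have hright : derivative ((1 - X : ℝ[X]) ^ (q + 1)) * X ^ (p + 1) =
        C (-((q : ℝ) + 1)) * (X ^ (p + 1) * (1 - X) ^ q) := by
      simp only [derivative_pow, derivative_sub, derivative_one, derivative_X, map_neg, map_add,
        map_natCast, map_one, add_tsub_cancel_right, cast_add, cast_one]
      ring
    have hparts := unitIntegral_mul_derivative ((1 - X) ^ (q + 1)) (X ^ (p + 1))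
    rw [hleft, hright, unitIntegral_C_mul, unitIntegral_C_mul, ih,
      show p + 1 + q + 1 = p + (q + 1) + 1 by ring] at hparts
    simp only [eval_pow, eval_sub, eval_one, eval_X, sub_self, zero_pow (succ_ne_zero _),
      zero_mul, mul_zero, sub_zero, neg_mul, sub_neg_eq_add, zero_add] at hparts
    rw [← mul_right_inj' (show (p : ℝ) + 1 ≠ 0 by positivity), hparts]
    push_cast [factorial_succ]
    ring

namespace Polynomial

theorem iterate_derivative_of_natDegree_le {R : Type*} [CommSemiring R] {p : R[X]} {n : ℕ}
    (hp : p.natDegree ≤ n) : derivative^[n] p = C (n ! * p.coeff n) := by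
  rw [eq_C_of_natDegree_le_zero ((natDegree_iterate_derivative p n).trans (by omega)),
    coeff_iterate_derivative, zero_add, descFactorial_self, nsmul_eq_mul]

theorem exists_eq_smul_add_degree_lt {K : Type*} [Field K] {p q : K[X]} (hp : p ≠ 0)
    (hq : q.natDegree ≤ p.natDegree) :
    ∃ (c : K) (r : K[X]), q = c • p + r ∧ r.degree < p.degree := by
  refine ⟨q.coeff p.natDegree / p.leadingCoeff, _, (add_sub_cancel _ _).symm, ?_⟩
  rw [degree_eq_natDegree hp, degree_lt_iff_coeff_zero]
  intro m hm
  rcases hm.eq_or_lt with rfl | hlt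
  · rw [coeff_sub, coeff_smul, smul_eq_mul, ← leadingCoeff,
      div_mul_cancel₀ _ (leadingCoeff_ne_zero.mpr hp), sub_self]
  · simp [coeff_eq_zero_of_natDegree_lt (hq.trans_lt hlt), coeff_eq_zero_of_natDegree_lt hlt]

theorem eval_iterate_derivative_X_pow_mul_one_sub_X_pow {i n : ℕ} (hi : i < n) :
    (derivative^[i] (X ^ n * (1 - X) ^ n : ℝ[X])).eval 0 = 0 ∧
      (derivative^[i] (X ^ n * (1 - X) ^ n : ℝ[X])).eval 1 = 0 := by
  have hX : X ∣ derivative^[i] (X ^ n * (1 - X) ^ n : ℝ[X]) :=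
    (dvd_pow_self X (by omega : n - i ≠ 0)).trans
      (pow_sub_dvd_iterate_derivative_of_pow_dvd i (dvd_mul_right _ _))
  have hX1 : X - C 1 ∣ derivative^[i] (X ^ n * (1 - X) ^ n : ℝ[X]) := by
    refine (dvd_pow_self (X - C 1) (by omega : n - i ≠ 0)).trans
      (pow_sub_dvd_iterate_derivative_of_pow_dvd i (Dvd.dvd.mul_left ?_ (X ^ n)))
    rw [map_one, ← neg_sub X 1, neg_pow]
    exact dvd_mul_left _ _
  exact ⟨by simpa [coeff_zero_eq_eval_zero] using X_dvd_iff.mp hX, dvd_iff_isRoot.mp hX1⟩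

end Polynomial

noncomputable abbrev realShiftedLegendre (n : ℕ) : ℝ[X] :=
  (shiftedLegendre n).map (Int.castRingHom ℝ)

theorem degree_realShiftedLegendre (n : ℕ) : (realShiftedLegendre n).degree = n := by
  rw [degree_map_eq_of_injective Int.cast_injective, degree_shiftedLegendre]

theorem natDegree_realShiftedLegendre (n : ℕ) : (realShiftedLegendre n).natDegree = n :=
  natDegree_eq_of_degree_eq_some (degree_realShiftedLegendre n)

theorem coeff_realShiftedLegendre (n k : ℕ) :
    (realShiftedLegendre n).coeff k = (-1) ^ k * n.choose k * (n + k).choose n := by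
  simp [coeff_map, coeff_shiftedLegendre]

theorem eval_zero_realShiftedLegendre (n : ℕ) : (realShiftedLegendre n).eval 0 = 1 := by
  rw [← coeff_zero_eq_eval_zero, coeff_realShiftedLegendre]
  simp

theorem factorial_mul_realShiftedLegendre (n : ℕ) :
    (n ! : ℝ[X]) * realShiftedLegendre n = derivative^[n] (X ^ n * (1 - X) ^ n) := by
  simpa [← iterate_derivative_map] using
    congrArg (map (Int.castRingHom ℝ)) (factorial_mul_shiftedLegendre_eq n)

theorem unitIntegral_mul_realShiftedLegendre_of_degree_lt {r : ℝ[X]} {n : ℕ}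
    (hr : r.degree < n) : unitIntegral (r * realShiftedLegendre n) = 0 := by
  have h := unitIntegral_mul_iterate_derivative (n := n)
    (fun i hi => eval_iterate_derivative_X_pow_mul_one_sub_X_pow hi) r
  rw [← factorial_mul_realShiftedLegendre, iterate_derivative_eq_zero_of_degree_lt hr, zero_mul,
    map_zero, mul_zero, mul_left_comm, ← C_eq_natCast, unitIntegral_C_mul] at h
  exact (mul_eq_zero.mp h).resolve_left (by positivity)

theorem unitIntegral_realShiftedLegendre_mul_self (n : ℕ) :
    unitIntegral (realShiftedLegendre n * realShiftedLegendre n) = 1 / (2 * n + 1) := by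
  have h := unitIntegral_mul_iterate_derivative (n := n)
    (fun i hi => eval_iterate_derivative_X_pow_mul_one_sub_X_pow hi) (realShiftedLegendre n)
  rw [← factorial_mul_realShiftedLegendre, mul_left_comm, ← C_eq_natCast, unitIntegral_C_mul,
    iterate_derivative_of_natDegree_le (natDegree_realShiftedLegendre n).le, unitIntegral_C_mul,
    unitIntegral_X_pow_mul_one_sub_X_pow, coeff_realShiftedLegendre, ← two_mul, choose_self,
    factorial_succ] at h
  have hchoose : ((2 * n).choose n : ℝ) * n ! * n ! = (2 * n)! := by
    have := Nat.choose_mul_factorial_mul_factorial (by omega : n ≤ 2 * n)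
    rw [show 2 * n - n = n by omega] at this
    exact_mod_cast this
  have hsign : ((-1 : ℝ) ^ n) * (-1) ^ n = 1 := by rw [← mul_pow]; norm_num
  apply mul_left_cancel₀ (show (n ! : ℝ) ≠ 0 by positivity)
  rw [h]
  push_cast
  field_simp
  linear_combination (n ! : ℝ) ^ 2 * (2 * n).choose n * hsign + hchoose

noncomputable def traceKernel (k : ℕ) : ℝ[X] :=
  ∑ n ∈ Finset.range k, (2 * n + 1 : ℝ) • realShiftedLegendre n

theorem degree_traceKernel_lt (k : ℕ) : (traceKernel k).degree < k := by
  rw [← mem_degreeLT]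
  refine Submodule.sum_mem _ fun n hn => Submodule.smul_mem _ _ ?_
  rw [mem_degreeLT, degree_realShiftedLegendre]
  exact_mod_cast Finset.mem_range.mp hn

theorem eval_zero_traceKernel (k : ℕ) : (traceKernel k).eval 0 = k ^ 2 := by
  induction k with
  | zero => simp [traceKernel]
  | succ k ih =>
    rw [traceKernel, Finset.sum_range_succ, eval_add, ← traceKernel, ih, eval_smul,
      eval_zero_realShiftedLegendre]
    push_cast
    ring

theorem unitIntegral_mul_traceKernel {q : ℝ[X]} {k : ℕ} (hq : q.degree < k) :
    unitIntegral (q * traceKernel k) = q.eval 0 := by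
  induction k generalizing q with
  | zero => simp [show q = 0 by simpa using hq]
  | succ k ih =>
    have hL : realShiftedLegendre k ≠ 0 := fun h => by
      simpa [h] using eval_zero_realShiftedLegendre k
    set L := realShiftedLegendre k
    obtain ⟨c, r, rfl, hr⟩ := exists_eq_smul_add_degree_lt hL
      ((natDegree_le_of_degree_le (Order.le_of_lt_succ hq)).trans
        (natDegree_realShiftedLegendre k).ge)
    rw [degree_realShiftedLegendre] at hr
    have hexpand : (c • L + r) * traceKernel (k + 1) =
        c • (traceKernel k * L) + (c * (2 * k + 1)) • (L * L) + r * traceKernel k +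
          (2 * k + 1 : ℝ) • (r * L) := by
      rw [traceKernel, Finset.sum_range_succ, ← traceKernel]
      simp only [smul_eq_C_mul, C_mul]
      ring
    rw [hexpand]
    simp only [map_add, map_smul, smul_eq_mul, eval_add, eval_smul, ih hr,
      unitIntegral_mul_realShiftedLegendre_of_degree_lt hr,
      unitIntegral_mul_realShiftedLegendre_of_degree_lt (degree_traceKernel_lt k),
      unitIntegral_realShiftedLegendre_mul_self, eval_zero_realShiftedLegendre, L]
    field_simp
    ring

theorem sq_eval_zero_le {q : ℝ[X]} {k : ℕ} (hq : q.natDegree ≤ k) :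
    q.eval 0 ^ 2 ≤ ((k : ℝ) + 1) ^ 2 * unitIntegral (q * q) := by
  set W := traceKernel (k + 1)
  set κ : ℝ := ((k : ℝ) + 1) ^ 2
  have hqW : unitIntegral (q * W) = q.eval 0 :=
    unitIntegral_mul_traceKernel
      ((degree_le_of_natDegree_le hq).trans_lt (by exact_mod_cast k.lt_succ_self))
  have hWW : unitIntegral (W * W) = κ := by
    rw [unitIntegral_mul_traceKernel (degree_traceKernel_lt _), eval_zero_traceKernel]
    push_cast
    ring
  have hexpand : (κ • q - q.eval 0 • W) * (κ • q - q.eval 0 • W) =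
      (κ * κ) • (q * q) - (2 * κ * q.eval 0) • (q * W) + (q.eval 0 * q.eval 0) • (W * W) := by
    simp only [smul_eq_C_mul, C_mul, C_ofNat]
    ring
  have hcs := unitIntegral_mul_self_nonneg (κ • q - q.eval 0 • W)
  rw [hexpand, map_add, map_sub, map_smul, map_smul, map_smul, hqW, hWW, smul_eq_mul,
    smul_eq_mul, smul_eq_mul] at hcs
  have h : 0 ≤ κ * (κ * unitIntegral (q * q) - q.eval 0 ^ 2) := by linear_combination hcs
  linarith [(mul_nonneg_iff_of_pos_left (by positivity : 0 < κ)).mp h]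

theorem sq_eval_add_le {p : ℝ[X]} {k : ℕ} (hp : p.natDegree ≤ k) (a : ℝ) {h : ℝ} (hh : 0 < h) :
    p.eval (a + h) ^ 2 ≤ ((k : ℝ) + 1) ^ 2 * h⁻¹ * ∫ x in a..a + h, p.eval x ^ 2 := by
  set q := p.comp (C (-h) * X + C (a + h))
  have hq : q.natDegree ≤ k :=
    calc q.natDegree ≤ p.natDegree * (C (-h) * X + C (a + h)).natDegree := natDegree_comp_le
      _ ≤ k * 1 := Nat.mul_le_mul hp natDegree_linear_le
      _ = k := mul_one k
  have heval (t : ℝ) : q.eval t = p.eval (-h * t + (a + h)) := by simp [q]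
  have hint : unitIntegral (q * q) = h⁻¹ * ∫ x in a..a + h, p.eval x ^ 2 := by
    simp_rw [unitIntegral_apply, eval_mul, heval, ← sq]
    rw [intervalIntegral.integral_comp_mul_add (fun x => p.eval x ^ 2) (neg_ne_zero.mpr hh.ne'),
      intervalIntegral.integral_symm]
    simp [inv_neg]
  have := sq_eval_zero_le hq
  rwa [hint, heval, mul_zero, zero_add, ← mul_assoc] at this

theorem intervalIntegral_le_mul_intervalIntegral_intervalIntegral {f : ℝ → ℝ → ℝ} {g : ℝ → ℝ}
    {a₁ a₂ b₁ b₂ c : ℝ} (hf : Continuous (Function.uncurry f)) (hg : Continuous g) (hb : b₁ ≤ b₂)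
    (hgf : ∀ y ∈ Set.Icc b₁ b₂, g y ≤ c * ∫ x in a₁..a₂, f x y) :
    ∫ y in b₁..b₂, g y ≤ c * ∫ x in a₁..a₂, ∫ y in b₁..b₂, f x y := by
  have hslice : Continuous fun y => ∫ x in a₁..a₂, f x y :=
    intervalIntegral.continuous_parametric_intervalIntegral_of_continuous' (f := fun y x => f x y)
      (hf.comp continuous_swap) a₁ a₂
  have hfub : MeasureTheory.IntegrableOn (Function.uncurry f) (Set.uIoc a₁ a₂ ×ˢ Set.uIoc b₁ b₂) :=
    (hf.continuousOn.integrableOn_compact (isCompact_uIcc.prod isCompact_uIcc)).mono_set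
      (Set.prod_mono Set.uIoc_subset_uIcc Set.uIoc_subset_uIcc)
  calc ∫ y in b₁..b₂, g y ≤ ∫ y in b₁..b₂, c * ∫ x in a₁..a₂, f x y :=
        intervalIntegral.integral_mono_on hb (hg.intervalIntegrable _ _)
          ((continuous_const.mul hslice).intervalIntegrable _ _) hgf
    _ = c * ∫ x in a₁..a₂, ∫ y in b₁..b₂, f x y := by
        rw [intervalIntegral.integral_const_mul,
          MeasureTheory.intervalIntegral_intervalIntegral_swap hfub]

theorem MvPolynomial.exists_eval_cons_eq_eval {R : Type*} [CommRing R] {n : ℕ}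
    (P : MvPolynomial (Fin (n + 1)) R) (s : Fin n → R) :
    ∃ p : R[X], p.natDegree ≤ P.degreeOf 0 ∧ ∀ x, MvPolynomial.eval (Fin.cons x s) P = p.eval x :=
  ⟨(MvPolynomial.finSuccEquiv R n P).map (MvPolynomial.eval s),
    natDegree_map_le.trans (MvPolynomial.natDegree_finSuccEquiv P).le,
    fun x => MvPolynomial.eval_eq_eval_mv_eval' s x P⟩

/-- Scaled discrete trace inequality on a square element of side length `h`:
if `v` is a tensor-product polynomial of degree at most `k` in each of the two
variables (i.e. `v ∈ Q_k`), `K = [a, a+h] × [b, b+h]` and `F = {a+h} × [b, b+h]`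
is its right edge, then
`∫_b^{b+h} v(a+h,y)^2 dy ≤ (k+1)^2 * h⁻¹ * ∫_a^{a+h} ∫_b^{b+h} v(x,y)^2 dy dx`. -/
theorem discrete_trace_inequality_square_scaled (k : ℕ) (h a b : ℝ) (hh : 0 < h)
    (v : ℝ × ℝ → ℝ) (P : MvPolynomial (Fin 2) ℝ)
    (hP : ∀ i : Fin 2, P.degreeOf i ≤ k)
    (hv : ∀ x y : ℝ, v (x, y) = MvPolynomial.eval ![x, y] P) :
    (∫ y in b..(b + h), (v (a + h, y)) ^ 2) ≤
      ((k : ℝ) + 1) ^ 2 * h⁻¹ *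
        ∫ x in a..(a + h), ∫ y in b..(b + h), (v (x, y)) ^ 2 := by
  have hcont : Continuous (Function.uncurry fun x y => MvPolynomial.eval ![x, y] P ^ 2) :=
    ((MvPolynomial.continuous_eval P).comp (by fun_prop)).pow 2
  have hedge : Continuous fun y => MvPolynomial.eval ![a + h, y] P ^ 2 :=
    ((MvPolynomial.continuous_eval P).comp (by fun_prop)).pow 2
  simp only [hv]
  refine intervalIntegral_le_mul_intervalIntegral_intervalIntegral hcont hedge (by linarith)
    fun y _ => ?_
  obtain ⟨p, hpk, hp⟩ := P.exists_eval_cons_eq_eval ![y]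
  have hslice : ∀ x, MvPolynomial.eval ![x, y] P = p.eval x := hp
  simp only [hslice]
  exact sq_eval_add_le (hpk.trans (hP 0)) a hh
end

section
/- Let α > 0, let Ω = [0,1] × [0,1], and let u₁, u₂, T : ℝ² → ℝ be twice continuously differentiable on an open set containing Ω, satisfying on Ω the incompressibility constraint ∂u₁/∂x₁ + ∂u₂/∂x₂ = 0 and the steady energy equation u₁ ∂T/∂x₁ + u₂ ∂T/∂x₂ = α (∂²T/∂x₁² + ∂²T/∂x₂²), and on the top and bottom walls u₂(x₁,0) = u₂(x₁,1) = 0 and ∂T/∂x₂(x₁,0) = ∂T/∂x₂(x₁,1) = 0 for all x₁ ∈ [0,1]. Define the line-averaged Nusselt number Nu(a) = (1/α) ∫₀¹ [u₁ T − α ∂T/∂x₁](a,x₂) dx₂ for a ∈ [0,1] and the domain-averaged Nusselt number Nu_avg = (1/α) ∫₀¹ ∫₀¹ [u₁ T − α ∂T/∂x₁](x₁,x₂) dx₂ dx₁. Then Nu(1/2) = Nu_avg; more generally Nu(a) = Nu_avg for every a ∈ [0,1]. -/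
/-!
The horizontal and vertical heat fluxes `q₁ = u₁ T - α ∂₁T` and `q₂ = u₂ T - α ∂₂T` satisfy
`∂₁q₁ + ∂₂q₂ = T div u + u·∇T - α ΔT = 0`. By the divergence theorem on `[0, a] × [0, 1]`, the
flux of `q₁` through `x₁ = a` equals that through `x₁ = 0`, since `q₂ = 0` on the top and bottom
walls. Hence `Nu(a)` does not depend on `a` and equals its average over `a ∈ [0, 1]`.
-/

open MeasureTheory Set
open scoped Interval

theorem integral_right_edge_eq_left_edge_of_divergence_eq_zero
    {E : Type*} [NormedAddCommGroup E] [NormedSpace ℝ E] {f g : ℝ × ℝ → E}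
    {f' g' : ℝ × ℝ → ℝ × ℝ →L[ℝ] E} {a₁ a₂ b₁ b₂ : ℝ}
    (Hcf : ContinuousOn f ([[a₁, b₁]] ×ˢ [[a₂, b₂]]))
    (Hcg : ContinuousOn g ([[a₁, b₁]] ×ˢ [[a₂, b₂]]))
    (Hdf : ∀ x ∈ Ioo (min a₁ b₁) (max a₁ b₁) ×ˢ Ioo (min a₂ b₂) (max a₂ b₂),
      HasFDerivAt f (f' x) x)
    (Hdg : ∀ x ∈ Ioo (min a₁ b₁) (max a₁ b₁) ×ˢ Ioo (min a₂ b₂) (max a₂ b₂),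
      HasFDerivAt g (g' x) x)
    (hdiv : ∀ x ∈ [[a₁, b₁]] ×ˢ [[a₂, b₂]], f' x (1, 0) + g' x (0, 1) = 0)
    (hwall : ∀ x ∈ [[a₁, b₁]], g (x, a₂) = g (x, b₂)) :
    ∫ y in a₂..b₂, f (b₁, y) = ∫ y in a₂..b₂, f (a₁, y) := by
  have hi : IntegrableOn (fun x => f' x (1, 0) + g' x (0, 1)) ([[a₁, b₁]] ×ˢ [[a₂, b₂]]) :=
    integrableOn_zero.congr_fun (fun x hx => (hdiv x hx).symm)
      (measurableSet_uIcc.prod measurableSet_uIcc)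
  have hzero : ∫ x in a₁..b₁, ∫ y in a₂..b₂, f' (x, y) (1, 0) + g' (x, y) (0, 1) = 0 := by
    refine (intervalIntegral.integral_congr fun x hx => ?_).trans intervalIntegral.integral_zero
    exact (intervalIntegral.integral_congr fun y hy => hdiv (x, y) ⟨hx, hy⟩).trans
      intervalIntegral.integral_zero
  have h := integral2_divergence_prod_of_hasFDerivAt f g f' g' a₁ a₂ b₁ b₂ Hcf Hcg Hdf Hdg hi
  rwa [hzero, intervalIntegral.integral_congr hwall, sub_self, zero_add, eq_comm,
    sub_eq_zero] at h

/-- With `u` the velocity component along `v`, this is the `v`-component of the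
convective–diffusive heat flux `u T - α ∇T`. -/
noncomputable def heatFlux {E : Type*} [NormedAddCommGroup E] [NormedSpace ℝ E]
    (α : ℝ) (u T : E → ℝ) (v : E) (p : E) : ℝ :=
  u p * T p - α * fderiv ℝ T p v

section HeatFlux

variable {E : Type*} [NormedAddCommGroup E] [NormedSpace ℝ E] {α : ℝ} {u T : E → ℝ} {v : E}

theorem ContDiffOn.fderiv_apply_of_isOpen {F : Type*} [NormedAddCommGroup F] [NormedSpace ℝ F]
    {f : E → F} {s : Set E} {m n : WithTop ℕ∞} (hf : ContDiffOn ℝ n f s) (hs : IsOpen s)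
    (hmn : m + 1 ≤ n) (w : E) : ContDiffOn ℝ m (fun q => fderiv ℝ f q w) s :=
  (hf.fderiv_of_isOpen hs hmn).clm_apply contDiffOn_const

theorem ContDiffOn.heatFlux {s : Set E} (hs : IsOpen s) (hu : ContDiffOn ℝ 1 u s)
    (hT : ContDiffOn ℝ 2 T s) : ContDiffOn ℝ 1 (heatFlux α u T v) s :=
  (hu.mul (hT.of_le one_le_two)).sub (contDiffOn_const.mul (hT.fderiv_apply_of_isOpen hs le_rfl v))

theorem fderiv_heatFlux_apply {p : E} (hu : DifferentiableAt ℝ u p)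
    (hT : DifferentiableAt ℝ T p) (hTv : DifferentiableAt ℝ (fun q => fderiv ℝ T q v) p)
    (w : E) :
    fderiv ℝ (heatFlux α u T v) p w =
      fderiv ℝ u p w * T p + u p * fderiv ℝ T p w -
        α * fderiv ℝ (fun q => fderiv ℝ T q v) p w := by
  have h : HasFDerivAt (heatFlux α u T v) _ p :=
    (hu.hasFDerivAt.mul hT.hasFDerivAt).sub (hTv.hasFDerivAt.const_mul α)
  rw [h.fderiv]
  simp only [sub_apply, add_apply, smul_apply, smul_eq_mul]
  ring

end HeatFlux

theorem integral_heatFlux_eq_of_cavity {α : ℝ} {u₁ u₂ T : ℝ × ℝ → ℝ} {U : Set (ℝ × ℝ)}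
    {a b c d : ℝ} (hcd : c ≤ d) (hU : IsOpen U) (hΩU : Icc a b ×ˢ Icc c d ⊆ U)
    (hu₁ : ContDiffOn ℝ 1 u₁ U) (hu₂ : ContDiffOn ℝ 1 u₂ U) (hT : ContDiffOn ℝ 2 T U)
    (hdiv : ∀ p ∈ Icc a b ×ˢ Icc c d, fderiv ℝ u₁ p (1, 0) + fderiv ℝ u₂ p (0, 1) = 0)
    (henergy : ∀ p ∈ Icc a b ×ˢ Icc c d,
      u₁ p * fderiv ℝ T p (1, 0) + u₂ p * fderiv ℝ T p (0, 1) =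
        α * (fderiv ℝ (fun q => fderiv ℝ T q (1, 0)) p (1, 0) +
             fderiv ℝ (fun q => fderiv ℝ T q (0, 1)) p (0, 1)))
    (hwall : ∀ x ∈ Icc a b, u₂ (x, c) = 0 ∧ u₂ (x, d) = 0)
    (hadia : ∀ x ∈ Icc a b, fderiv ℝ T (x, c) (0, 1) = 0 ∧ fderiv ℝ T (x, d) (0, 1) = 0)
    {x : ℝ} (hx : x ∈ Icc a b) :
    ∫ y in c..d, heatFlux α u₁ T (1, 0) (x, y) = ∫ y in c..d, heatFlux α u₁ T (1, 0) (a, y) := by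
  have hax : [[a, x]] ⊆ Icc a b := by
    rw [uIcc_of_le hx.1]
    exact Icc_subset_Icc le_rfl hx.2
  have hR : [[a, x]] ×ˢ [[c, d]] ⊆ Icc a b ×ˢ Icc c d := prod_mono hax (uIcc_of_le hcd).subset
  have hRU := hR.trans hΩU
  have hdiff : ∀ {f : ℝ × ℝ → ℝ}, ContDiffOn ℝ 1 f U → ∀ p ∈ U, DifferentiableAt ℝ f p :=
    fun hf p hp => (hf.differentiableOn one_ne_zero).differentiableAt (hU.mem_nhds hp)
  have hT' := hT.of_le one_le_two
  have hq₁ := hu₁.heatFlux (α := α) (v := ((1 : ℝ), (0 : ℝ))) hU hT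
  have hq₂ := hu₂.heatFlux (α := α) (v := ((0 : ℝ), (1 : ℝ))) hU hT
  have hT₁ := hT.fderiv_apply_of_isOpen (m := 1) hU le_rfl ((1 : ℝ), (0 : ℝ))
  have hT₂ := hT.fderiv_apply_of_isOpen (m := 1) hU le_rfl ((0 : ℝ), (1 : ℝ))
  have hInt : Ioo (min a x) (max a x) ×ˢ Ioo (min c d) (max c d) ⊆ U :=
    (prod_mono Ioo_subset_Icc_self Ioo_subset_Icc_self).trans hRU
  refine integral_right_edge_eq_left_edge_of_divergence_eq_zero (hq₁.continuousOn.mono hRU)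
    (hq₂.continuousOn.mono hRU) (fun p hp => (hdiff hq₁ p (hInt hp)).hasFDerivAt)
    (fun p hp => (hdiff hq₂ p (hInt hp)).hasFDerivAt) (fun p hp => ?_) (fun y hy => ?_)
  · have hpU := hRU hp
    rw [fderiv_heatFlux_apply (hdiff hu₁ p hpU) (hdiff hT' p hpU) (hdiff hT₁ p hpU),
      fderiv_heatFlux_apply (hdiff hu₂ p hpU) (hdiff hT' p hpU) (hdiff hT₂ p hpU)]
    linear_combination T p * hdiv p (hR hp) + henergy p (hR hp)
  · have hy' := hax hy
    simp [heatFlux, (hwall y hy').1, (hwall y hy').2, (hadia y hy').1, (hadia y hy').2]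

theorem nusselt_line_eq_avg_general
    (α : ℝ)
    (u₁ u₂ T : ℝ × ℝ → ℝ)
    (U : Set (ℝ × ℝ)) (hU : IsOpen U)
    (hΩU : Set.Icc (0:ℝ) 1 ×ˢ Set.Icc (0:ℝ) 1 ⊆ U)
    (hu₁ : ContDiffOn ℝ 2 u₁ U) (hu₂ : ContDiffOn ℝ 2 u₂ U)
    (hT : ContDiffOn ℝ 2 T U)
    -- incompressibility: ∂u₁/∂x₁ + ∂u₂/∂x₂ = 0 on Ω
    (hdiv : ∀ p ∈ Set.Icc (0:ℝ) 1 ×ˢ Set.Icc (0:ℝ) 1,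
      fderiv ℝ u₁ p (1, 0) + fderiv ℝ u₂ p (0, 1) = 0)
    -- steady energy equation: u·∇T = α ΔT on Ω
    (henergy : ∀ p ∈ Set.Icc (0:ℝ) 1 ×ˢ Set.Icc (0:ℝ) 1,
      u₁ p * fderiv ℝ T p (1, 0) + u₂ p * fderiv ℝ T p (0, 1) =
        α * (fderiv ℝ (fun q => fderiv ℝ T q (1, 0)) p (1, 0) +
             fderiv ℝ (fun q => fderiv ℝ T q (0, 1)) p (0, 1)))
    -- impermeable top and bottom walls
    (hwall : ∀ x₁ ∈ Set.Icc (0:ℝ) 1, u₂ (x₁, 0) = 0 ∧ u₂ (x₁, 1) = 0)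
    -- adiabatic top and bottom walls
    (hadia : ∀ x₁ ∈ Set.Icc (0:ℝ) 1,
      fderiv ℝ T (x₁, 0) (0, 1) = 0 ∧ fderiv ℝ T (x₁, 1) (0, 1) = 0)
    -- line-averaged Nusselt number
    (Nu : ℝ → ℝ)
    (hNu : ∀ a : ℝ, Nu a = (1 / α) * ∫ x₂ in (0:ℝ)..1,
      (u₁ (a, x₂) * T (a, x₂) - α * fderiv ℝ T (a, x₂) (1, 0)))
    -- domain-averaged Nusselt number
    (NuAvg : ℝ)
    (hNuAvg : NuAvg = (1 / α) * ∫ x₁ in (0:ℝ)..1, ∫ x₂ in (0:ℝ)..1,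
      (u₁ (x₁, x₂) * T (x₁, x₂) - α * fderiv ℝ T (x₁, x₂) (1, 0))) :
    Nu (1 / 2) = NuAvg ∧ ∀ a ∈ Set.Icc (0:ℝ) 1, Nu a = NuAvg := by
  have hflux : ∀ a ∈ Set.Icc (0:ℝ) 1,
      ∫ x₂ in (0:ℝ)..1, (u₁ (a, x₂) * T (a, x₂) - α * fderiv ℝ T (a, x₂) (1, 0)) =
        ∫ x₂ in (0:ℝ)..1, (u₁ (0, x₂) * T (0, x₂) - α * fderiv ℝ T (0, x₂) (1, 0)) :=
    fun a ha => integral_heatFlux_eq_of_cavity zero_le_one hU hΩU (hu₁.of_le one_le_two)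
      (hu₂.of_le one_le_two) hT hdiv henergy hwall hadia ha
  have hline : ∀ a ∈ Set.Icc (0:ℝ) 1, Nu a = Nu 0 := fun a ha => by
    rw [hNu, hNu, hflux a ha]
  have havg : NuAvg = Nu 0 := by
    have hI : [[(0:ℝ), 1]] = Icc 0 1 := uIcc_of_le zero_le_one
    rw [hNuAvg, intervalIntegral.integral_congr fun a ha => hflux a (hI ▸ ha),
      intervalIntegral.integral_const, hNu, sub_zero, one_smul]
  exact ⟨(hline _ ⟨by norm_num, by norm_num⟩).trans havg.symm,
    fun a ha => (hline a ha).trans havg.symm⟩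

/-- For the steady differentially heated cavity problem on the unit square, the
line-averaged Nusselt number `Nu(a) = (1/α) ∫₀¹ (u₁ T − α ∂T/∂x₁)(a, x₂) dx₂`
coincides with the domain-averaged Nusselt number
`Nu_avg = (1/α) ∫₀¹ ∫₀¹ (u₁ T − α ∂T/∂x₁)(x₁, x₂) dx₂ dx₁`; in particular
`Nu(1/2) = Nu_avg`, and more generally `Nu(a) = Nu_avg` for every `a ∈ [0,1]`. -/
theorem nusselt_line_eq_avg
    (α : ℝ) (hα : 0 < α)
    (u₁ u₂ T : ℝ × ℝ → ℝ)
    (U : Set (ℝ × ℝ)) (hU : IsOpen U)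
    (hΩU : Set.Icc (0:ℝ) 1 ×ˢ Set.Icc (0:ℝ) 1 ⊆ U)
    (hu₁ : ContDiffOn ℝ 2 u₁ U) (hu₂ : ContDiffOn ℝ 2 u₂ U)
    (hT : ContDiffOn ℝ 2 T U)
    -- incompressibility: ∂u₁/∂x₁ + ∂u₂/∂x₂ = 0 on Ω
    (hdiv : ∀ p ∈ Set.Icc (0:ℝ) 1 ×ˢ Set.Icc (0:ℝ) 1,
      fderiv ℝ u₁ p (1, 0) + fderiv ℝ u₂ p (0, 1) = 0)
    -- steady energy equation: u·∇T = α ΔT on Ω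
    (henergy : ∀ p ∈ Set.Icc (0:ℝ) 1 ×ˢ Set.Icc (0:ℝ) 1,
      u₁ p * fderiv ℝ T p (1, 0) + u₂ p * fderiv ℝ T p (0, 1) =
        α * (fderiv ℝ (fun q => fderiv ℝ T q (1, 0)) p (1, 0) +
             fderiv ℝ (fun q => fderiv ℝ T q (0, 1)) p (0, 1)))
    -- impermeable top and bottom walls
    (hwall : ∀ x₁ ∈ Set.Icc (0:ℝ) 1, u₂ (x₁, 0) = 0 ∧ u₂ (x₁, 1) = 0)
    -- adiabatic top and bottom walls
    (hadia : ∀ x₁ ∈ Set.Icc (0:ℝ) 1,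
      fderiv ℝ T (x₁, 0) (0, 1) = 0 ∧ fderiv ℝ T (x₁, 1) (0, 1) = 0)
    -- line-averaged Nusselt number
    (Nu : ℝ → ℝ)
    (hNu : ∀ a : ℝ, Nu a = (1 / α) * ∫ x₂ in (0:ℝ)..1,
      (u₁ (a, x₂) * T (a, x₂) - α * fderiv ℝ T (a, x₂) (1, 0)))
    -- domain-averaged Nusselt number
    (NuAvg : ℝ)
    (hNuAvg : NuAvg = (1 / α) * ∫ x₁ in (0:ℝ)..1, ∫ x₂ in (0:ℝ)..1,
      (u₁ (x₁, x₂) * T (x₁, x₂) - α * fderiv ℝ T (x₁, x₂) (1, 0))) :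
    Nu (1 / 2) = NuAvg ∧ ∀ a ∈ Set.Icc (0:ℝ) 1, Nu a = NuAvg :=
  nusselt_line_eq_avg_general α u₁ u₂ T U hU hΩU hu₁ hu₂ hT hdiv henergy hwall hadia Nu hNu NuAvg
    hNuAvg
end
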